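/- Let T > 0. The smallest positive value of m for which the Dirichlet problem z''(t) = −m z(−t) on [-T,T] with z(−T)=z(T)=0 has a nontrivial solution is m = (π/(2T))²; a corresponding eigenfunction is z(t) = cos(π t/(2T)). -/

import Mathlib

/-- `m` is a Dirichlet eigenvalue of the reflection problem
`z''(t) = -m z(-t)` on `[-T,T]`, `z(-T) = z(T) = 0`. -/
def IsEig15 (T m : ℝ) : Prop :=
  ∃ z : ℝ → ℝ, ContDiffOn ℝ 2 z (Set.Icc (-T) T) ∧
    (∃ t ∈ Set.Icc (-T) T, z t ≠ 0) ∧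
    (∀ t ∈ Set.Icc (-T) T,
      iteratedDerivWithin 2 z (Set.Icc (-T) T) t = -m * z (-t)) ∧
    z (-T) = 0 ∧ z T = 0

/-!
With `e(t) = z(t) + z(-t)` and `o(t) = z(t) - z(-t)` the reflection equation decouples into
`e'' = -m e` and `o'' = m o`. On `[0, T]` the odd part vanishes, since `o(0) = o(T) = 0` and
`sinh` has no positive zero, while `e'(0) = 0`; hence `z(t) = z(0) cos(√m t)` with `z(0) ≠ 0`.
The boundary condition then forces `cos(√m T) = 0`, so `√m T ≥ π/2`.
-/

open Set Real

section Calculus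

variable {𝕜 F : Type*} [NontriviallyNormedField 𝕜] [NormedAddCommGroup F] [NormedSpace 𝕜 F]

theorem iteratedDerivWithin_two_eq_of_hasDerivAt {f f' f'' : 𝕜 → F} {s : Set 𝕜}
    (hs : UniqueDiffOn 𝕜 s) (hf : ∀ x, HasDerivAt f (f' x) x) (hf' : ∀ x, HasDerivAt f' (f'' x) x)
    {x : 𝕜} (hx : x ∈ s) : iteratedDerivWithin 2 f s x = f'' x := by
  have h : EqOn (derivWithin f s) f' s := fun y hy => (hf y).hasDerivWithinAt.derivWithin (hs y hy)
  rw [iteratedDerivWithin_eq_iterate]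
  change derivWithin (derivWithin f s) s x = f'' x
  rw [derivWithin_congr h (h hx)]
  exact (hf' x).hasDerivWithinAt.derivWithin (hs x hx)

theorem ContDiffOn.hasDerivWithinAt_derivWithin {f : 𝕜 → F} {s : Set 𝕜}
    (hf : ContDiffOn 𝕜 2 f s) (hs : UniqueDiffOn 𝕜 s) {x : 𝕜} (hx : x ∈ s) :
    HasDerivWithinAt (derivWithin f s) (iteratedDerivWithin 2 f s x) s x := by
  rw [iteratedDerivWithin_eq_iterate]
  have hf' : ContDiffOn 𝕜 1 (derivWithin f s) s := hf.derivWithin hs (by norm_num)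
  exact (hf'.differentiableOn one_ne_zero x hx).hasDerivWithinAt

theorem HasDerivWithinAt.comp_neg {f : 𝕜 → F} {f' : F} {s : Set 𝕜} {x : 𝕜}
    (hf : HasDerivWithinAt f f' (-s) (-x)) : HasDerivWithinAt (fun y => f (-y)) (-f') s x := by
  rw [← neg_one_smul 𝕜 f']
  exact hf.scomp x (hasDerivWithinAt_neg x s) fun y hy => by simpa using hy

end Calculus

theorem constant_of_hasDerivWithinAt_Icc_zero {g : ℝ → ℝ} {a b : ℝ}
    (hg : ∀ t ∈ Icc a b, HasDerivWithinAt g 0 (Icc a b) t) : ∀ t ∈ Icc a b, g t = g a :=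
  constant_of_has_deriv_right_zero (fun t ht => (hg t ht).continuousWithinAt) fun t ht =>
    (hg t (Ico_subset_Icc_self ht)).mono_of_mem_nhdsWithin (Icc_mem_nhdsGE_of_mem ht)

theorem eq_mul_exp_of_hasDerivWithinAt {g : ℝ → ℝ} {c T : ℝ}
    (hg : ∀ t ∈ Icc 0 T, HasDerivWithinAt g (c * g t) (Icc 0 T) t) :
    ∀ t ∈ Icc 0 T, g t = g 0 * exp (c * t) := by
  have hconst := constant_of_hasDerivWithinAt_Icc_zero (g := fun t => g t * exp (-(c * t)))
    fun t ht => ((hg t ht).mul ((hasDerivWithinAt_id t _).const_mul c).neg.exp).congr_deriv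
      (by ring)
  intro t ht
  have h := hconst t ht
  simp only [mul_zero, neg_zero, exp_zero, mul_one] at h
  rw [← h, mul_assoc, ← exp_add, neg_add_cancel, exp_zero, mul_one]

section SecondOrder

variable {f f' : ℝ → ℝ} {m T : ℝ}

theorem eq_zero_of_hasDerivWithinAt_neg_mul (hm : 0 < m)
    (hf : ∀ t ∈ Icc 0 T, HasDerivWithinAt f (f' t) (Icc 0 T) t)
    (hf' : ∀ t ∈ Icc 0 T, HasDerivWithinAt f' (-m * f t) (Icc 0 T) t)
    (h₀ : f 0 = 0) (h₀' : f' 0 = 0) : ∀ t ∈ Icc 0 T, f t = 0 := by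
  have henergy := constant_of_hasDerivWithinAt_Icc_zero (g := fun t => f' t ^ 2 + m * f t ^ 2)
    fun t ht => (((hf' t ht).pow 2).add (((hf t ht).pow 2).const_mul m)).congr_deriv (by ring)
  intro t ht
  have h := henergy t ht
  rw [h₀, h₀'] at h
  have hfm : m * f t ^ 2 = 0 := by nlinarith [sq_nonneg (f' t), mul_nonneg hm.le (sq_nonneg (f t))]
  simpa [hm.ne'] using hfm

theorem eq_mul_cos_of_hasDerivWithinAt_neg_mul (hm : 0 < m)
    (hf : ∀ t ∈ Icc 0 T, HasDerivWithinAt f (f' t) (Icc 0 T) t)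
    (hf' : ∀ t ∈ Icc 0 T, HasDerivWithinAt f' (-m * f t) (Icc 0 T) t) (h₀' : f' 0 = 0) :
    ∀ t ∈ Icc 0 T, f t = f 0 * cos (√m * t) := by
  have hsq : √m ^ 2 = m := sq_sqrt hm.le
  have hlin (t : ℝ) : HasDerivWithinAt (fun u => √m * u) √m (Icc 0 T) t := by
    simpa using (hasDerivWithinAt_id t (Icc 0 T)).const_mul √m
  have hdiff := eq_zero_of_hasDerivWithinAt_neg_mul hm
    (f := fun t => f t - f 0 * cos (√m * t)) (f' := fun t => f' t + f 0 * √m * sin (√m * t))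
    (fun t ht => ((hf t ht).sub ((hlin t).cos.const_mul (f 0))).congr_deriv (by ring))
    (fun t ht => ((hf' t ht).add ((hlin t).sin.const_mul (f 0 * √m))).congr_deriv
      (by linear_combination (f 0 * cos (√m * t)) * hsq))
    (by simp) (by simp [h₀'])
  exact fun t ht => sub_eq_zero.1 (hdiff t ht)

theorem eq_zero_of_hasDerivWithinAt_mul (hm : 0 < m) (hT : 0 < T)
    (hf : ∀ t ∈ Icc 0 T, HasDerivWithinAt f (f' t) (Icc 0 T) t)
    (hf' : ∀ t ∈ Icc 0 T, HasDerivWithinAt f' (m * f t) (Icc 0 T) t)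
    (h₀ : f 0 = 0) (hT₀ : f T = 0) : ∀ t ∈ Icc 0 T, f t = 0 := by
  set r := √m
  have hr : 0 < r := sqrt_pos.2 hm
  have hsq : r ^ 2 = m := sq_sqrt hm.le
  have hdecay := eq_mul_exp_of_hasDerivWithinAt (g := fun t => f' t - r * f t) (c := -r)
    fun t ht => ((hf' t ht).sub ((hf t ht).const_mul r)).congr_deriv
      (by linear_combination -f t * hsq)
  have hgrowth := eq_mul_exp_of_hasDerivWithinAt (g := fun t => f' t + r * f t) (c := r)
    fun t ht => ((hf' t ht).add ((hf t ht).const_mul r)).congr_deriv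
      (by linear_combination -f t * hsq)
  simp only [h₀, mul_zero, sub_zero, add_zero] at hdecay hgrowth
  have hsplit (t : ℝ) (ht : t ∈ Icc 0 T) : 2 * r * f t = f' 0 * (exp (r * t) - exp (-r * t)) := by
    linear_combination hgrowth t ht - hdecay t ht
  have hslope : f' 0 = 0 := by
    have hexp : exp (-r * T) < exp (r * T) := exp_lt_exp.2 (by nlinarith)
    have h := hsplit T (right_mem_Icc.2 hT.le)
    rw [hT₀, mul_zero] at h
    exact (mul_eq_zero.1 h.symm).resolve_right (sub_ne_zero.2 hexp.ne')
  intro t ht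
  have h := hsplit t ht
  rw [hslope, zero_mul] at h
  simpa [hr.ne'] using h

end SecondOrder

theorem eq_mul_cos_of_reflection {z z' : ℝ → ℝ} {m T : ℝ} (hm : 0 < m) (hT : 0 < T)
    (hz : ∀ t ∈ Icc (-T) T, HasDerivWithinAt z (z' t) (Icc (-T) T) t)
    (hz' : ∀ t ∈ Icc (-T) T, HasDerivWithinAt z' (-m * z (-t)) (Icc (-T) T) t)
    (hl : z (-T) = 0) (hr : z T = 0) : ∀ t ∈ Icc (-T) T, z t = z 0 * cos (√m * t) := by
  set s := Icc (-T) T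
  have hneg : -s = s := by simp [s]
  have hmem {t : ℝ} (ht : t ∈ s) : -t ∈ s := ⟨by linarith [ht.2], by linarith [ht.1]⟩
  have hsub : Icc 0 T ⊆ s := Icc_subset_Icc_left (by linarith)
  have hrefl {g g' : ℝ → ℝ} (hg : ∀ t ∈ s, HasDerivWithinAt g (g' t) s t) (t : ℝ) (ht : t ∈ s) :
      HasDerivWithinAt (fun u => g (-u)) (-g' (-t)) s t := by
    apply HasDerivWithinAt.comp_neg
    rw [hneg]
    exact hg (-t) (hmem ht)
  have heven := eq_mul_cos_of_hasDerivWithinAt_neg_mul hm (T := T)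
    (f := fun u => z u + z (-u)) (f' := fun u => z' u - z' (-u))
    (fun t ht => (((hz t (hsub ht)).add (hrefl hz t (hsub ht))).congr_deriv (by ring)).mono hsub)
    (fun t ht => (((hz' t (hsub ht)).sub (hrefl hz' t (hsub ht))).congr_deriv
      (by rw [neg_neg]; ring)).mono hsub) (by simp)
  have hodd := eq_zero_of_hasDerivWithinAt_mul hm hT
    (f := fun u => z u - z (-u)) (f' := fun u => z' u + z' (-u))
    (fun t ht => (((hz t (hsub ht)).sub (hrefl hz t (hsub ht))).congr_deriv (by ring)).mono hsub)
    (fun t ht => (((hz' t (hsub ht)).add (hrefl hz' t (hsub ht))).congr_deriv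
      (by rw [neg_neg]; ring)).mono hsub) (by simp) (by simp [hl, hr])
  simp only [neg_zero] at heven
  intro t ht
  rcases le_total 0 t with h | h
  · linarith [heven t ⟨h, ht.2⟩, hodd t ⟨h, ht.2⟩]
  · have hnt : -t ∈ Icc 0 T := ⟨by linarith, by linarith [ht.1]⟩
    have he := heven (-t) hnt
    have ho := hodd (-t) hnt
    rw [neg_neg, mul_neg, cos_neg] at he
    rw [neg_neg] at ho
    linarith

theorem iteratedDerivWithin_two_cos_mul {s : Set ℝ} (hs : UniqueDiffOn ℝ s) (c : ℝ) {t : ℝ}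
    (ht : t ∈ s) : iteratedDerivWithin 2 (fun t => cos (c * t)) s t = -(c ^ 2) * cos (c * t) := by
  have hlin (t : ℝ) : HasDerivAt (fun u => c * u) c t := by
    simpa using (hasDerivAt_id t).const_mul c
  exact iteratedDerivWithin_two_eq_of_hasDerivAt (f'' := fun t => -(c ^ 2) * cos (c * t)) hs
    (fun t => (hlin t).cos)
    (fun t => ((hlin t).sin.neg.mul_const c).congr_deriv (by ring)) ht

theorem sq_pi_div_two_mul_le_of_isEig15 {T m : ℝ} (hT : 0 < T) (hm : 0 < m) (h : IsEig15 T m) :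
    (π / (2 * T)) ^ 2 ≤ m := by
  obtain ⟨z, hzC, ⟨t₀, ht₀, hzt₀⟩, hode, hl, hr⟩ := h
  have hs : UniqueDiffOn ℝ (Icc (-T) T) := uniqueDiffOn_Icc (by linarith)
  have hz := eq_mul_cos_of_reflection hm hT
    (fun t ht => (hzC.differentiableOn two_ne_zero t ht).hasDerivWithinAt)
    (fun t ht => hode t ht ▸ hzC.hasDerivWithinAt_derivWithin hs ht) hl hr
  have hz₀ : z 0 ≠ 0 := fun h₀ => hzt₀ (by rw [hz t₀ ht₀, h₀, zero_mul])
  have hcos : cos (√m * T) = 0 := by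
    have h := hz T (right_mem_Icc.2 (by linarith))
    rw [hr] at h
    exact (mul_eq_zero.1 h.symm).resolve_left hz₀
  have hquarter : π / 2 ≤ √m * T := by
    by_contra! hlt
    have hpos : 0 < √m * T := mul_pos (sqrt_pos.2 hm) hT
    exact (cos_pos_of_mem_Ioo ⟨by linarith [pi_pos], hlt⟩).ne' hcos
  calc (π / (2 * T)) ^ 2 ≤ √m ^ 2 := by
        gcongr
        rw [div_le_iff₀ (by positivity)]
        linarith
    _ = m := sq_sqrt hm.le

theorem stmt15 (T : ℝ) (hT : 0 < T) :
    (∀ t ∈ Set.Icc (-T) T,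
      iteratedDerivWithin 2 (fun t => Real.cos (Real.pi * t / (2 * T)))
          (Set.Icc (-T) T) t =
        -((Real.pi / (2 * T)) ^ 2) * Real.cos (Real.pi * (-t) / (2 * T))) ∧
    IsEig15 T ((Real.pi / (2 * T)) ^ 2) ∧
    (∀ m : ℝ, 0 < m → IsEig15 T m → (Real.pi / (2 * T)) ^ 2 ≤ m) := by
  have hφ : (fun t => cos (π * t / (2 * T))) = fun t => cos (π / (2 * T) * t) := by
    ext t
    ring_nf
  have hode (t : ℝ) (ht : t ∈ Icc (-T) T) :
      iteratedDerivWithin 2 (fun t => cos (π * t / (2 * T))) (Icc (-T) T) t =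
        -((π / (2 * T)) ^ 2) * cos (π * (-t) / (2 * T)) := by
    rw [hφ, iteratedDerivWithin_two_cos_mul (uniqueDiffOn_Icc (by linarith)) _ ht, ← cos_neg]
    ring_nf
  have hend : π * T / (2 * T) = π / 2 := by field_simp
  refine ⟨hode, ⟨_, ?_, ⟨0, ⟨by linarith, hT.le⟩, by simp⟩, hode, ?_, ?_⟩,
    fun m hm => sq_pi_div_two_mul_le_of_isEig15 hT hm⟩
  · rw [hφ]
    exact (contDiff_cos.comp (contDiff_const.mul contDiff_id)).contDiffOn
  · simp only [mul_neg, neg_div, cos_neg, hend, cos_pi_div_two]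
  · simp only [hend, cos_pi_div_two]
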